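/- arXiv:2510.07205 — 2 statements merged into one kernel-verified Lean document; each statement's English description precedes it below -/
import Mathlib

section
/- Let v, w ∈ ℝ^d be unit vectors and let g, h : ℝ → ℝ be twice continuously differentiable functions all of whose relevant derivatives have at most polynomial growth. Then for x ~ N(0, I_d), E[g(vᵀx) h(wᵀx) x xᵀ] = E[g(vᵀx) h(wᵀx)] I_d + E[g'(vᵀx) h'(wᵀx)] (v wᵀ + w vᵀ) + E[g''(vᵀx) h(wᵀx)] v vᵀ + E[g(vᵀx) h''(wᵀx)] w wᵀ. -/
/-!
Gaussian integration by parts, `E[F(x) x_k] = E[∂_k F(x)]`, holds in one dimension because the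
standard Gaussian density `p` satisfies `p' = -x p`, and in `ℝ^d` by integrating out the `k`-th
coordinate first. Applied to `F = g(vᵀx) h(wᵀx) x_i` in direction `j` it produces the identity
term and two first-order terms, and applied once more in direction `i` to each of those it
produces the remaining three. All integrands grow at most polynomially, hence are integrable
because Gaussian measures have moments of all orders.
-/

open MeasureTheory ProbabilityTheory

/-- The standard Gaussian measure on `ℝ^d` (i.i.d. standard Gaussian coordinates). -/
noncomputable def stdGaussian (d : ℕ) : Measure (Fin d → ℝ) :=
  Measure.pi fun _ => gaussianReal 0 1

open Asymptotics Function Real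

lemma stdGaussian_eq_map_ofLp (d : ℕ) :
    _root_.stdGaussian d = (ProbabilityTheory.stdGaussian (EuclideanSpace ℝ (Fin d))).map
      (PiLp.continuousLinearEquiv 2 ℝ fun _ : Fin d => ℝ) := by
  rw [← map_pi_eq_stdGaussian, Measure.map_map (by fun_prop) (by fun_prop)]
  exact Measure.map_id.symm

instance (d : ℕ) : IsGaussian (_root_.stdGaussian d) := by
  rw [stdGaussian_eq_map_ofLp]
  infer_instance

def HasPolyGrowth {E : Type*} [Norm E] (f : E → ℝ) : Prop :=
  ∃ q : ℕ, f =O[⊤] fun x => (1 + ‖x‖) ^ q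

namespace HasPolyGrowth

variable {E : Type*} [NormedAddCommGroup E] {f g : E → ℝ}

lemma of_abs_le {f : ℝ → ℝ} {C : ℝ} {q : ℕ} (h : ∀ x, |f x| ≤ C * (1 + |x|) ^ q) :
    HasPolyGrowth f :=
  ⟨q, isBigO_top.2 ⟨C, fun x => by
    simpa [abs_of_nonneg (by positivity : (0 : ℝ) ≤ 1 + |x|)] using h x⟩⟩

lemma mul (hf : HasPolyGrowth f) (hg : HasPolyGrowth g) : HasPolyGrowth fun x => f x * g x := by
  obtain ⟨p, hp⟩ := hf
  obtain ⟨q, hq⟩ := hg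
  exact ⟨p + q, by simpa only [pow_add] using hp.mul hq⟩

lemma apply {ι : Type*} [Fintype ι] (i : ι) : HasPolyGrowth fun x : ι → ℝ => x i :=
  ⟨1, isBigO_top.2 ⟨1, fun x => by
    simpa [abs_of_nonneg (by positivity : (0 : ℝ) ≤ 1 + ‖x‖)] using
      (norm_le_pi_norm x i).trans (le_add_of_nonneg_left zero_le_one)⟩⟩

lemma comp_clm [NormedSpace ℝ E] {f : ℝ → ℝ} (hf : HasPolyGrowth f) (L : E →L[ℝ] ℝ) :
    HasPolyGrowth (f ∘ L) := by
  obtain ⟨q, hq⟩ := hf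
  refine ⟨q, (hq.comp_tendsto Filter.tendsto_top).trans (IsBigO.pow ?_ q)⟩
  refine isBigO_top.2 ⟨1 + ‖L‖, fun x => ?_⟩
  have hLx : ‖L x‖ ≤ ‖L‖ * ‖x‖ := L.le_opNorm x
  rw [Real.norm_of_nonneg (by positivity : (0 : ℝ) ≤ 1 + ‖L x‖),
    Real.norm_of_nonneg (by positivity : (0 : ℝ) ≤ 1 + ‖x‖)]
  nlinarith [norm_nonneg L, norm_nonneg x]

lemma comp_dot {ι : Type*} [Fintype ι] {f : ℝ → ℝ} (hf : HasPolyGrowth f) (v : ι → ℝ) :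
    HasPolyGrowth fun x : ι → ℝ => f (∑ l, v l * x l) := by
  let L : (ι → ℝ) →L[ℝ] ℝ := ∑ l, v l • ContinuousLinearMap.proj l
  have hL : ∀ x, L x = ∑ l, v l * x l := fun x => by simp [L]
  simpa only [comp_def, hL] using hf.comp_clm L

lemma integrable [MeasurableSpace E] [BorelSpace E] [NormedSpace ℝ E] [CompleteSpace E]
    [SecondCountableTopology E] {μ : Measure E} [IsGaussian μ] (hf : HasPolyGrowth f)
    (hm : AEStronglyMeasurable f μ) : Integrable f μ := by
  obtain ⟨q, hq⟩ := hf
  have h1 : MemLp (fun x : E => ‖x‖) q μ := (IsGaussian.memLp_id μ q (by simp)).norm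
  have h2 : MemLp (fun x : E => 1 + ‖x‖) q μ := (memLp_const (1 : ℝ)).add h1
  refine hq.integrable hm (h2.integrable_norm_pow'.congr (ae_of_all _ fun x => ?_))
  simp only [Real.norm_of_nonneg (by positivity : (0 : ℝ) ≤ 1 + ‖x‖)]

lemma integrable_stdGaussian {d : ℕ} {F : (Fin d → ℝ) → ℝ} (hF : HasPolyGrowth F)
    (hc : Continuous F) : Integrable F (_root_.stdGaussian d) :=
  hF.integrable hc.aestronglyMeasurable

end HasPolyGrowth

lemma hasDerivAt_gaussianPDFReal_zero_one (x : ℝ) :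
    HasDerivAt (gaussianPDFReal 0 1) (-x * gaussianPDFReal 0 1 x) x := by
  have hpdf : gaussianPDFReal 0 1 = fun t => (√(2 * π))⁻¹ * rexp (-t ^ 2 / 2) := by
    ext t; simp [gaussianPDFReal]
  have h : HasDerivAt (fun t : ℝ => -t ^ 2 / 2) (-x) x :=
    ((hasDerivAt_pow 2 x).neg.div_const 2).congr_deriv (by ring)
  rw [hpdf]
  exact (h.exp.const_mul _).congr_deriv (by ring)

lemma MeasureTheory.Integrable.gaussianPDFReal_mul {f : ℝ → ℝ}
    (hf : Integrable f (gaussianReal 0 1)) : Integrable fun x => gaussianPDFReal 0 1 x * f x := by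
  rw [gaussianReal_of_var_ne_zero _ one_ne_zero, integrable_withDensity_iff_integrable_smul'
    (measurable_gaussianPDF 0 1) (ae_of_all _ fun _ => gaussianPDF_lt_top)] at hf
  simpa only [toReal_gaussianPDF, smul_eq_mul] using hf

lemma integral_mul_id_gaussianReal {f f' : ℝ → ℝ} (hf : ∀ x, HasDerivAt f (f' x) x)
    (hfx : Integrable (fun x => f x * x) (gaussianReal 0 1))
    (hf' : Integrable f' (gaussianReal 0 1)) (hf0 : Integrable f (gaussianReal 0 1)) :
    ∫ x, f x * x ∂gaussianReal 0 1 = ∫ x, f' x ∂gaussianReal 0 1 := by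
  have parts := integral_mul_deriv_eq_deriv_mul_of_integrable (fun x _ => hf x)
    (fun x _ => hasDerivAt_gaussianPDFReal_zero_one x)
    (hfx.gaussianPDFReal_mul.neg.congr
      (ae_of_all _ fun x => by simp only [Pi.mul_apply, Pi.neg_apply]; ring))
    (hf'.gaussianPDFReal_mul.congr (ae_of_all _ fun x => mul_comm _ _))
    (hf0.gaussianPDFReal_mul.congr (ae_of_all _ fun x => mul_comm _ _))
  simp only [integral_gaussianReal_eq_integral_smul one_ne_zero, smul_eq_mul]
  calc ∫ x, gaussianPDFReal 0 1 x * (f x * x)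
      = -∫ x, f x * (-x * gaussianPDFReal 0 1 x) := by
        rw [← integral_neg]; congr 1 with x; ring
    _ = ∫ x, gaussianPDFReal 0 1 x * f' x := by
        rw [parts, neg_neg]; congr 1 with x; ring

lemma integral_mul_apply_stdGaussian {d : ℕ} {F F' : (Fin d → ℝ) → ℝ} (k : Fin d)
    (hF : ∀ x, HasDerivAt (fun t => F (update x k t)) (F' x) (x k))
    (hFx : Integrable (fun x => F x * x k) (stdGaussian d))
    (hF' : Integrable F' (stdGaussian d)) (hF0 : Integrable F (stdGaussian d)) :
    ∫ x, F x * x k ∂stdGaussian d = ∫ x, F' x ∂stdGaussian d := by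
  obtain ⟨n, rfl⟩ : ∃ n, d = n + 1 := Nat.exists_eq_add_one_of_ne_zero k.pos.ne'
  have he : MeasurePreserving (MeasurableEquiv.piFinSuccAbove (fun _ => ℝ) k).symm
      ((gaussianReal 0 1).prod (stdGaussian n)) (stdGaussian (n + 1)) :=
    (measurePreserving_piFinSuccAbove (fun _ => gaussianReal 0 1) k).symm _
  have slice {G : (Fin (n + 1) → ℝ) → ℝ} (hG : Integrable G (stdGaussian (n + 1))) :
      (∫ x, G x ∂stdGaussian (n + 1)
        = ∫ y, ∫ t, G (k.insertNth t y) ∂gaussianReal 0 1 ∂stdGaussian n) ∧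
      ∀ᵐ y ∂stdGaussian n, Integrable (fun t => G (k.insertNth t y)) (gaussianReal 0 1) := by
    rw [← he.integrable_comp_emb (MeasurableEquiv.measurableEmbedding _)] at hG
    exact ⟨(he.integral_comp' G).symm.trans (integral_prod_symm _ hG), hG.prod_left_ae⟩
  obtain ⟨hx, hx_ae⟩ := slice hFx
  obtain ⟨h', h'_ae⟩ := slice hF'
  obtain ⟨-, h0_ae⟩ := slice hF0
  rw [hx, h']
  refine integral_congr_ae ?_
  filter_upwards [hx_ae, h'_ae, h0_ae] with y hxy h'y h0y
  simpa using integral_mul_id_gaussianReal (fun t => by simpa using hF (k.insertNth t y))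
    (by simpa using hxy) h'y h0y

section Ridge

variable {ι : Type*} [Fintype ι] [DecidableEq ι] (v w : ι → ℝ) {φ ψ : ℝ → ℝ}

lemma hasDerivAt_dot_update (x : ι → ℝ) (k : ι) :
    HasDerivAt (fun t => ∑ l, v l * update x k t l) (v k) (x k) := by
  have h := HasDerivAt.fun_sum fun l (_ : l ∈ Finset.univ) =>
    (hasDerivAt_pi.1 (hasDerivAt_update x k (x k)) l).const_mul (v l)
  simpa [Pi.single_apply] using h

lemma hasDerivAt_comp_dot_update (x : ι → ℝ) (k : ι)
    (hφ : DifferentiableAt ℝ φ (∑ l, v l * x l)) :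
    HasDerivAt (fun t => φ (∑ l, v l * update x k t l))
      (deriv φ (∑ l, v l * x l) * v k) (x k) :=
  hφ.hasDerivAt.comp_of_eq (x k) (hasDerivAt_dot_update v x k) (by simp)

lemma hasDerivAt_ridge_mul_ridge_update (hφ : Differentiable ℝ φ) (hψ : Differentiable ℝ ψ)
    (x : ι → ℝ) (k : ι) :
    HasDerivAt (fun t => φ (∑ l, v l * update x k t l) * ψ (∑ l, w l * update x k t l))
      (v k * (deriv φ (∑ l, v l * x l) * ψ (∑ l, w l * x l))
        + w k * (φ (∑ l, v l * x l) * deriv ψ (∑ l, w l * x l))) (x k) :=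
  ((hasDerivAt_comp_dot_update v x k (hφ _)).mul
    (hasDerivAt_comp_dot_update w x k (hψ _))).congr_deriv (by simp; ring)

end Ridge

section RidgeStein

variable {d : ℕ} (v w : Fin d → ℝ) {φ ψ : ℝ → ℝ}

lemma integral_ridge_mul_ridge_mul_apply (hφ : ContDiff ℝ 1 φ) (hψ : ContDiff ℝ 1 ψ)
    (gφ : HasPolyGrowth φ) (gφ' : HasPolyGrowth (deriv φ))
    (gψ : HasPolyGrowth ψ) (gψ' : HasPolyGrowth (deriv ψ)) (k : Fin d) :
    ∫ x, φ (∑ l, v l * x l) * ψ (∑ l, w l * x l) * x k ∂stdGaussian d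
      = v k * ∫ x, deriv φ (∑ l, v l * x l) * ψ (∑ l, w l * x l) ∂stdGaussian d
        + w k * ∫ x, φ (∑ l, v l * x l) * deriv ψ (∑ l, w l * x l) ∂stdGaussian d := by
  have cφ := hφ.continuous
  have cψ := hψ.continuous
  have cφ' := hφ.continuous_deriv_one
  have cψ' := hψ.continuous_deriv_one
  have gF := (gφ.comp_dot v).mul (gψ.comp_dot w)
  have hA := ((gφ'.comp_dot v).mul (gψ.comp_dot w)).integrable_stdGaussian (by fun_prop)
  have hB := ((gφ.comp_dot v).mul (gψ'.comp_dot w)).integrable_stdGaussian (by fun_prop)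
  rw [integral_mul_apply_stdGaussian k
      (fun x => hasDerivAt_ridge_mul_ridge_update v w (hφ.differentiable one_ne_zero)
        (hψ.differentiable one_ne_zero) x k)
      ((gF.mul (.apply k)).integrable_stdGaussian (by fun_prop))
      ((hA.const_mul (v k)).fun_add (hB.const_mul (w k)))
      (gF.integrable_stdGaussian (by fun_prop)),
    integral_add (hA.const_mul _) (hB.const_mul _), integral_const_mul, integral_const_mul]

lemma integral_ridge_mul_ridge_mul_apply_mul_apply (hφ : ContDiff ℝ 1 φ)
    (hψ : ContDiff ℝ 1 ψ) (gφ : HasPolyGrowth φ) (gφ' : HasPolyGrowth (deriv φ))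
    (gψ : HasPolyGrowth ψ) (gψ' : HasPolyGrowth (deriv ψ)) (i k : Fin d) :
    ∫ x, φ (∑ l, v l * x l) * ψ (∑ l, w l * x l) * x i * x k ∂stdGaussian d
      = v k * ∫ x, deriv φ (∑ l, v l * x l) * ψ (∑ l, w l * x l) * x i ∂stdGaussian d
        + w k * ∫ x, φ (∑ l, v l * x l) * deriv ψ (∑ l, w l * x l) * x i ∂stdGaussian d
        + (if i = k then 1 else 0)
          * ∫ x, φ (∑ l, v l * x l) * ψ (∑ l, w l * x l) ∂stdGaussian d := by
  have cφ := hφ.continuous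
  have cψ := hψ.continuous
  have cφ' := hφ.continuous_deriv_one
  have cψ' := hψ.continuous_deriv_one
  have gF := (gφ.comp_dot v).mul (gψ.comp_dot w)
  have hA := ((gφ'.comp_dot v).mul (gψ.comp_dot w)).mul (.apply i) |>.integrable_stdGaussian
    (d := d) (by fun_prop)
  have hB := ((gφ.comp_dot v).mul (gψ'.comp_dot w)).mul (.apply i) |>.integrable_stdGaussian
    (d := d) (by fun_prop)
  have hC := gF.integrable_stdGaussian (d := d) (by fun_prop)
  have hF (x : Fin d → ℝ) :=
    (hasDerivAt_ridge_mul_ridge_update v w (hφ.differentiable one_ne_zero)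
      (hψ.differentiable one_ne_zero) x k).mul (hasDerivAt_pi.1 (hasDerivAt_update x k (x k)) i)
  rw [integral_mul_apply_stdGaussian k
      (F' := fun x => v k * (deriv φ (∑ l, v l * x l) * ψ (∑ l, w l * x l) * x i)
        + w k * (φ (∑ l, v l * x l) * deriv ψ (∑ l, w l * x l) * x i)
        + (if i = k then 1 else 0) * (φ (∑ l, v l * x l) * ψ (∑ l, w l * x l)))
      (fun x => (hF x).congr_deriv (by simp [Pi.single_apply]; ring))
      ((gF.mul (.apply i)).mul (.apply k) |>.integrable_stdGaussian (by fun_prop))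
      (((hA.const_mul _).fun_add (hB.const_mul _)).fun_add (hC.const_mul _))
      ((gF.mul (.apply i)).integrable_stdGaussian (by fun_prop)),
    integral_add ((hA.const_mul _).fun_add (hB.const_mul _)) (hC.const_mul _),
    integral_add (hA.const_mul _) (hB.const_mul _), integral_const_mul, integral_const_mul,
    integral_const_mul]

end RidgeStein

theorem second_order_stein_general
    (d : ℕ) (v w : Fin d → ℝ)
    (g h : ℝ → ℝ) (hg : ContDiff ℝ 2 g) (hh : ContDiff ℝ 2 h)
    (hgrow : ∀ n : ℕ, n ≤ 2 → ∃ (C : ℝ) (q : ℕ), ∀ x : ℝ,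
      |iteratedDeriv n g x| ≤ C * (1 + |x|) ^ q)
    (hgrow' : ∀ n : ℕ, n ≤ 2 → ∃ (C : ℝ) (q : ℕ), ∀ x : ℝ,
      |iteratedDeriv n h x| ≤ C * (1 + |x|) ^ q)
    (i j : Fin d) :
    ∫ x, g (∑ l, v l * x l) * h (∑ l, w l * x l) * x i * x j ∂(stdGaussian d)
      = (∫ x, g (∑ l, v l * x l) * h (∑ l, w l * x l) ∂(stdGaussian d)) *
          (if i = j then 1 else 0)
        + (∫ x, deriv g (∑ l, v l * x l) * deriv h (∑ l, w l * x l) ∂(stdGaussian d)) *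
            (v i * w j + w i * v j)
        + (∫ x, iteratedDeriv 2 g (∑ l, v l * x l) * h (∑ l, w l * x l) ∂(stdGaussian d)) *
            (v i * v j)
        + (∫ x, g (∑ l, v l * x l) * iteratedDeriv 2 h (∑ l, w l * x l) ∂(stdGaussian d)) *
            (w i * w j) := by
  have growth {f : ℝ → ℝ} (hf : ∀ n : ℕ, n ≤ 2 → ∃ (C : ℝ) (q : ℕ), ∀ x : ℝ,
      |iteratedDeriv n f x| ≤ C * (1 + |x|) ^ q) (n : ℕ) (hn : n ≤ 2) :
      HasPolyGrowth (iteratedDeriv n f) :=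
    let ⟨_, _, hb⟩ := hf n hn; .of_abs_le hb
  have g0 : HasPolyGrowth g := by simpa using growth hgrow 0 (by norm_num)
  have g1 : HasPolyGrowth (deriv g) := by simpa using growth hgrow 1 (by norm_num)
  have g2 : HasPolyGrowth (deriv (deriv g)) := by
    simpa [iteratedDeriv_succ] using growth hgrow 2 le_rfl
  have h0 : HasPolyGrowth h := by simpa using growth hgrow' 0 (by norm_num)
  have h1 : HasPolyGrowth (deriv h) := by simpa using growth hgrow' 1 (by norm_num)
  have h2 : HasPolyGrowth (deriv (deriv h)) := by
    simpa [iteratedDeriv_succ] using growth hgrow' 2 le_rfl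
  have hg1 : ContDiff ℝ 1 g := hg.of_le one_le_two
  have hh1 : ContDiff ℝ 1 h := hh.of_le one_le_two
  rw [integral_ridge_mul_ridge_mul_apply_mul_apply v w hg1 hh1 g0 g1 h0 h1 i j,
    integral_ridge_mul_ridge_mul_apply v w (hg.deriv' (n := 1)) hh1 g1 g2 h0 h1 i,
    integral_ridge_mul_ridge_mul_apply v w hg1 (hh.deriv' (n := 1)) g0 g1 h1 h2 i]
  simp only [iteratedDeriv_succ, iteratedDeriv_zero]
  ring

/-- Second-order Stein identity: for unit vectors `v, w` and `C²` functions `g, h` with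
polynomially growing derivatives, `E[g(vᵀx)h(wᵀx) x xᵀ]` decomposes into identity,
`v wᵀ + w vᵀ`, `v vᵀ` and `w wᵀ` parts (stated entrywise). -/
theorem second_order_stein
    (d : ℕ) (v w : Fin d → ℝ)
    (hv : ∑ l, (v l) ^ 2 = 1) (hw : ∑ l, (w l) ^ 2 = 1)
    (g h : ℝ → ℝ) (hg : ContDiff ℝ 2 g) (hh : ContDiff ℝ 2 h)
    (hgrow : ∀ n : ℕ, n ≤ 2 → ∃ (C : ℝ) (q : ℕ), ∀ x : ℝ,
      |iteratedDeriv n g x| ≤ C * (1 + |x|) ^ q)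
    (hgrow' : ∀ n : ℕ, n ≤ 2 → ∃ (C : ℝ) (q : ℕ), ∀ x : ℝ,
      |iteratedDeriv n h x| ≤ C * (1 + |x|) ^ q)
    (i j : Fin d) :
    ∫ x, g (∑ l, v l * x l) * h (∑ l, w l * x l) * x i * x j ∂(stdGaussian d)
      = (∫ x, g (∑ l, v l * x l) * h (∑ l, w l * x l) ∂(stdGaussian d)) *
          (if i = j then 1 else 0)
        + (∫ x, deriv g (∑ l, v l * x l) * deriv h (∑ l, w l * x l) ∂(stdGaussian d)) *
            (v i * w j + w i * v j)
        + (∫ x, iteratedDeriv 2 g (∑ l, v l * x l) * h (∑ l, w l * x l) ∂(stdGaussian d)) *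
            (v i * v j)
        + (∫ x, g (∑ l, v l * x l) * iteratedDeriv 2 h (∑ l, w l * x l) ∂(stdGaussian d)) *
            (w i * w j) :=
  second_order_stein_general d v w g h hg hh hgrow hgrow' i j
end

section
/- Let X and Y be independent standard Gaussian random variables. Then for every δ > 0, P( Y < X < (1+δ) Y | X ≥ 0, Y ≥ 0 ) = (2/π) arctan( δ/(2+δ) ) ≤ δ/π. -/
open MeasureTheory ProbabilityTheory Real Set

/-!
In polar coordinates the law of two independent standard Gaussians is
`(2π)⁻¹ r e^{-r²/2} dr dθ`, and `∫₀^∞ r e^{-r²/2} dr = 1`, so a cone of opening angle `α` has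
probability `α / (2π)`. The event is the cone between the slopes `1 / (1 + δ)` and `1`, of opening
`π/4 - arctan (1 + δ)⁻¹ = arctan (δ / (2 + δ))`, and the conditioning event is the quadrant, of
opening `π/2`. The bound follows from `arctan x ≤ x`.
-/

namespace Real

theorem arctan_le_self {x : ℝ} (hx : 0 ≤ x) : arctan x ≤ x := by
  simpa using le_tan (arctan_nonneg.2 hx) (arctan_lt_pi_div_two x)

theorem pi_div_four_sub_arctan_inv {c : ℝ} (hc : 0 < c) :
    π / 4 - arctan c⁻¹ = arctan ((c - 1) / (c + 1)) := by
  have hprod : c⁻¹ * ((c - 1) / (c + 1)) < 1 := by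
    rw [inv_mul_eq_div, div_div, div_lt_one (by positivity)]
    nlinarith
  rw [← arctan_one, sub_eq_iff_eq_add', arctan_add hprod]
  congr 1
  rw [eq_div_iff (sub_pos.2 hprod).ne']
  field_simp
  ring

theorem arctan_lt_iff_lt_tan {x θ : ℝ} (hθ : θ ∈ Ioo (-(π / 2)) (π / 2)) :
    arctan x < θ ↔ x < tan θ := by
  rw [← arctan_lt_arctan_iff (x := x), arctan_tan hθ.1 hθ.2]

theorem lt_arctan_iff_tan_lt {x θ : ℝ} (hθ : θ ∈ Ioo (-(π / 2)) (π / 2)) :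
    θ < arctan x ↔ tan θ < x := by
  rw [← arctan_lt_arctan_iff (y := x), arctan_tan hθ.1 hθ.2]

theorem cos_nonneg_and_sin_nonneg_iff {θ : ℝ} (hθ : θ ∈ Ioo (-π) π) :
    0 ≤ cos θ ∧ 0 ≤ sin θ ↔ θ ∈ Icc 0 (π / 2) := by
  constructor
  · rintro ⟨hcos, hsin⟩
    have hθ0 : 0 ≤ θ := by
      by_contra! h
      exact (sin_neg_of_neg_of_neg_pi_lt h hθ.1).not_ge hsin
    refine ⟨hθ0, ?_⟩
    by_contra! h
    exact (cos_neg_of_pi_div_two_lt_of_lt h (by linarith [hθ.2, pi_pos])).not_ge hcos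
  · rintro ⟨h0, hπ⟩
    exact ⟨cos_nonneg_of_mem_Icc ⟨by linarith [pi_pos], hπ⟩,
      sin_nonneg_of_nonneg_of_le_pi h0 (by linarith [pi_pos])⟩

end Real

theorem polar_mem_first_quadrant_iff {r θ : ℝ} (hr : 0 < r) (hθ : θ ∈ Ioo (-π) π) :
    0 ≤ r * cos θ ∧ 0 ≤ r * sin θ ↔ θ ∈ Icc 0 (π / 2) := by
  simp only [mul_nonneg_iff_of_pos_left hr, cos_nonneg_and_sin_nonneg_iff hθ]

theorem polar_mem_ratio_cone_iff {c r θ : ℝ} (hc : 0 < c) (hr : 0 < r) (hθ : θ ∈ Ioo (-π) π) :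
    ((r * sin θ < r * cos θ ∧ r * cos θ < c * (r * sin θ)) ∧ 0 ≤ r * cos θ ∧ 0 ≤ r * sin θ) ↔
      θ ∈ Ioo (arctan c⁻¹) (π / 4) := by
  rw [polar_mem_first_quadrant_iff hr hθ, mul_left_comm c r, mul_lt_mul_iff_right₀ hr,
    mul_lt_mul_iff_right₀ hr, ← arctan_one]
  constructor
  · rintro ⟨⟨hsc, hcs⟩, hquad⟩
    have hcos : 0 < cos θ := ((cos_nonneg_and_sin_nonneg_iff hθ).2 hquad).2.trans_lt hsc
    have hθ' : θ ∈ Ioo (-(π / 2)) (π / 2) :=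
      ⟨by linarith [pi_pos, hquad.1], hquad.2.lt_of_ne (by rintro rfl; simp at hcos)⟩
    rw [mem_Ioo, arctan_lt_iff_lt_tan hθ', lt_arctan_iff_tan_lt hθ', tan_eq_sin_div_cos,
      lt_div_iff₀ hcos, div_lt_one hcos]
    exact ⟨(inv_mul_lt_iff₀ hc).2 hcs, hsc⟩
  · rintro ⟨hlo, hhi⟩
    have hθ0 : 0 < θ := (arctan_pos.2 (inv_pos.2 hc)).trans hlo
    have hθ' : θ ∈ Ioo (-(π / 2)) (π / 2) := ⟨by linarith [pi_pos], by linarith [arctan_one]⟩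
    have hcos : 0 < cos θ := cos_pos_of_mem_Ioo hθ'
    rw [arctan_lt_iff_lt_tan hθ', tan_eq_sin_div_cos, lt_div_iff₀ hcos] at hlo
    rw [lt_arctan_iff_tan_lt hθ', tan_eq_sin_div_cos, div_lt_one hcos] at hhi
    exact ⟨⟨hhi, (inv_mul_lt_iff₀ hc).1 hlo⟩, hθ0.le, hθ'.2.le⟩

theorem integral_Ioi_mul_exp_neg_sq_div_two :
    ∫ r in Ioi (0 : ℝ), r * exp (-r ^ 2 / 2) = 1 := by
  have h := integral_mul_cexp_neg_mul_sq (b := 1 / 2) (by norm_num)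
  have h_ofReal : ∀ r : ℝ, (r : ℂ) * Complex.exp (-(1 / 2) * (r : ℂ) ^ 2)
      = ((r * exp (-r ^ 2 / 2) : ℝ) : ℂ) := by
    intro r
    push_cast
    ring_nf
  simp_rw [h_ofReal, integral_complex_ofReal] at h
  norm_num at h
  exact_mod_cast h

theorem lintegral_Ioi_mul_exp_neg_sq_div_two :
    ∫⁻ r in Ioi (0 : ℝ), ENNReal.ofReal (r * exp (-r ^ 2 / 2)) = 1 := by
  rw [← ofReal_integral_eq_lintegral_ofReal, integral_Ioi_mul_exp_neg_sq_div_two,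
    ENNReal.ofReal_one]
  · exact (integrable_mul_exp_neg_mul_sq (b := 1 / 2) (by norm_num)).integrableOn.congr_fun
      (fun r _ => by ring_nf) measurableSet_Ioi
  · filter_upwards [ae_restrict_mem measurableSet_Ioi] with r hr
    exact mul_nonneg (le_of_lt hr) (exp_pos _).le

theorem gaussianPDFReal_mul_gaussianPDFReal_polar (r θ : ℝ) :
    gaussianPDFReal 0 1 (r * cos θ) * gaussianPDFReal 0 1 (r * sin θ)
      = exp (-r ^ 2 / 2) / (2 * π) := by
  simp only [gaussianPDFReal, NNReal.coe_one, mul_one, sub_zero]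
  rw [mul_mul_mul_comm, ← exp_add, ← mul_inv, mul_self_sqrt (by positivity), inv_mul_eq_div]
  congr 2
  linear_combination (-(r ^ 2) / 2) * sin_sq_add_cos_sq θ

theorem gaussianReal_prod_apply_of_polar {S : Set (ℝ × ℝ)} {s : Set ℝ} (hS : MeasurableSet S)
    (hs : MeasurableSet s) (hs_sub : s ⊆ Ioo (-π) π)
    (hS_polar : ∀ r θ, 0 < r → θ ∈ Ioo (-π) π → ((r * cos θ, r * sin θ) ∈ S ↔ θ ∈ s)) :
    (gaussianReal 0 1).prod (gaussianReal 0 1) S = ENNReal.ofReal (2 * π)⁻¹ * volume s := by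
  set F : ℝ → ENNReal := fun r ↦ ENNReal.ofReal (2 * π)⁻¹ * ENNReal.ofReal (r * exp (-r ^ 2 / 2))
  have hF : Measurable F := by fun_prop
  have h_polar : ∀ p ∈ polarCoord.target, ENNReal.ofReal p.1 •
      S.indicator (fun q ↦ gaussianPDF 0 1 q.1 * gaussianPDF 0 1 q.2) (polarCoord.symm p)
        = (Ioi 0 ×ˢ s).indicator (fun p ↦ F p.1) p := by
    rintro ⟨r, θ⟩ ⟨hr : 0 < r, hθ : θ ∈ Ioo (-π) π⟩
    rw [polarCoord_symm_apply]
    by_cases hθs : θ ∈ s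
    · rw [indicator_of_mem ((hS_polar r θ hr hθ).2 hθs),
        indicator_of_mem (mk_mem_prod (mem_Ioi.2 hr) hθs), smul_eq_mul, gaussianPDF, gaussianPDF,
        ← ENNReal.ofReal_mul (gaussianPDFReal_nonneg _ _ _),
        gaussianPDFReal_mul_gaussianPDFReal_polar, ← ENNReal.ofReal_mul hr.le]
      simp only [F]
      rw [← ENNReal.ofReal_mul (by positivity)]
      congr 1
      ring
    · rw [indicator_of_notMem (fun h ↦ hθs ((hS_polar r θ hr hθ).1 h)),
        indicator_of_notMem (fun h ↦ hθs h.2), smul_zero]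
  rw [gaussianReal_of_var_ne_zero 0 one_ne_zero,
    prod_withDensity (measurable_gaussianPDF 0 1) (measurable_gaussianPDF 0 1),
    withDensity_apply _ hS, ← lintegral_indicator hS, ← Measure.volume_eq_prod,
    ← lintegral_comp_polarCoord_symm,
    setLIntegral_congr_fun polarCoord.open_target.measurableSet h_polar,
    setLIntegral_indicator (measurableSet_Ioi.prod hs), polarCoord_target,
    inter_eq_left.2 (prod_mono subset_rfl hs_sub), Measure.volume_eq_prod,
    ← Measure.prod_restrict, lintegral_prod (fun p ↦ F p.1) (hF.comp measurable_fst).aemeasurable]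
  simp only [lintegral_const, Measure.restrict_apply_univ]
  rw [lintegral_mul_const _ hF, lintegral_const_mul _ (by fun_prop),
    lintegral_Ioi_mul_exp_neg_sq_div_two, mul_one]

/-- For independent standard Gaussians `X, Y`:
`P(Y < X < (1+δ)Y ∣ X ≥ 0, Y ≥ 0) = (2/π) arctan(δ/(2+δ)) ≤ δ/π`. -/
theorem gaussian_ratio_conditional_prob (δ : ℝ) (hδ : 0 < δ) :
    ((gaussianReal 0 1).prod (gaussianReal 0 1))
        {q : ℝ × ℝ | (q.2 < q.1 ∧ q.1 < (1 + δ) * q.2) ∧ 0 ≤ q.1 ∧ 0 ≤ q.2} /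
      ((gaussianReal 0 1).prod (gaussianReal 0 1)) {q : ℝ × ℝ | 0 ≤ q.1 ∧ 0 ≤ q.2}
      = ENNReal.ofReal (2 / Real.pi * Real.arctan (δ / (2 + δ))) ∧
    2 / Real.pi * Real.arctan (δ / (2 + δ)) ≤ δ / Real.pi := by
  have hc : 0 < 1 + δ := by linarith
  have hnum := gaussianReal_prod_apply_of_polar
    (S := {q : ℝ × ℝ | (q.2 < q.1 ∧ q.1 < (1 + δ) * q.2) ∧ 0 ≤ q.1 ∧ 0 ≤ q.2})
    (by measurability) measurableSet_Ioo
    (fun θ hθ ↦ ⟨by linarith [neg_pi_div_two_lt_arctan (1 + δ)⁻¹, pi_pos, hθ.1],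
      by linarith [pi_pos, hθ.2]⟩)
    (fun r θ hr hθ ↦ polar_mem_ratio_cone_iff hc hr hθ)
  have hden := gaussianReal_prod_apply_of_polar (S := {q : ℝ × ℝ | 0 ≤ q.1 ∧ 0 ≤ q.2})
    (by measurability) measurableSet_Icc
    (fun θ hθ ↦ ⟨by linarith [pi_pos, hθ.1], by linarith [pi_pos, hθ.2]⟩)
    (fun r θ hr hθ ↦ polar_mem_first_quadrant_iff hr hθ)
  have hangle : π / 4 - arctan (1 + δ)⁻¹ = arctan (δ / (2 + δ)) := by
    rw [pi_div_four_sub_arctan_inv hc]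
    congr 1
    ring
  refine ⟨?_, ?_⟩
  · rw [hnum, hden, ENNReal.mul_div_mul_left _ _ (ENNReal.ofReal_pos.2 (by positivity)).ne'
      ENNReal.ofReal_ne_top, volume_Ioo, volume_Icc, sub_zero,
      ← ENNReal.ofReal_div_of_pos (by positivity), hangle]
    congr 1
    field_simp
  · calc 2 / π * arctan (δ / (2 + δ)) ≤ 2 / π * (δ / 2) := by
          gcongr
          exact (arctan_le_self (by positivity)).trans (by gcongr; linarith)
      _ = δ / π := by ring
end
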